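/- arXiv:1902.00010 — 2 statements merged into one kernel-verified Lean document; each statement's English description precedes it below -/
import Mathlib

section
/- Let u, v ∈ ℂ⁴ be linearly independent and let W = span_ℂ{u, v}. If the Plücker coordinates t₁,…,t₆ of the pair (u,v) are all real and satisfy t₂ = t₅ and t₃ = −t₄, then j̃(W) = W, i.e. the projective line ℙ(W) is a twistor line. -/
/-!
The plane `W = span {u, v}` is the kernel of `w ↦ u ∧ v ∧ w`, whose four components are the
contractions of `w` with the Plücker vector `t` of `(u, v)`. When `t` is real with `t₂ = t₅` and
`t₃ = -t₄`, this contraction turns `j̃` into `-j̃`, so `j̃` preserves its kernel `W`; as `j̃² = -1`,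
`j̃` then maps `W` onto `W`.
-/

/-- The conjugate-linear map `j̃ : ℂ⁴ → ℂ⁴`,
`j̃(z₀,z₁,z₂,z₃) = (−conj z₁, conj z₀, −conj z₃, conj z₂)`,
inducing the fixed-point-free anti-holomorphic involution `j` on `ℂℙ³`. -/
noncomputable def jt (z : Fin 4 → ℂ) : Fin 4 → ℂ :=
  ![-(starRingEnd ℂ) (z 1), (starRingEnd ℂ) (z 0), -(starRingEnd ℂ) (z 3), (starRingEnd ℂ) (z 2)]

/-- The Plücker coordinates `(t₁,…,t₆)` of a pair of vectors `(u,v)` in `ℂ⁴`: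
`t₁ = u₀v₁−u₁v₀`, `t₂ = u₀v₂−u₂v₀`, `t₃ = u₀v₃−u₃v₀`, `t₄ = u₁v₂−u₂v₁`,
`t₅ = u₁v₃−u₃v₁`, `t₆ = u₂v₃−u₃v₂` (indexed here by `Fin 6`, so `t_{i+1} = plucker u v i`). -/
noncomputable def plucker (u v : Fin 4 → ℂ) : Fin 6 → ℂ :=
  ![u 0 * v 1 - u 1 * v 0, u 0 * v 2 - u 2 * v 0, u 0 * v 3 - u 3 * v 0,
    u 1 * v 2 - u 2 * v 1, u 1 * v 3 - u 3 * v 1, u 2 * v 3 - u 3 * v 2]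

section TripleMinor

variable {ι K : Type*}

def tripleMinor [CommRing K] (u v w : ι → K) (i j k : ι) : K :=
  w i * (u j * v k - u k * v j) - w j * (u i * v k - u k * v i) + w k * (u i * v j - u j * v i)

variable [Field K]

theorem exists_sub_mul_ne_zero_of_linearIndependent {u v : ι → K}
    (hli : LinearIndependent K ![u, v]) : ∃ i j, u i * v j - u j * v i ≠ 0 := by
  obtain ⟨j, hj⟩ : ∃ j, v j ≠ 0 := Function.ne_iff.1 (hli.ne_zero 1)
  by_contra! h
  have hdep : v j • u + (-u j) • v = 0 := funext fun i => by
    simp only [Pi.add_apply, Pi.smul_apply, smul_eq_mul, Pi.zero_apply]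
    linear_combination h i j
  exact hj (LinearIndependent.pair_iff.1 hli _ _ hdep).1

theorem mem_span_pair_of_tripleMinor_eq_zero {u v w : ι → K}
    (hli : LinearIndependent K ![u, v]) (h : ∀ i j k, tripleMinor u v w i j k = 0) :
    w ∈ Submodule.span K {u, v} := by
  obtain ⟨i, j, hij⟩ := exists_sub_mul_ne_zero_of_linearIndependent hli
  refine Submodule.mem_span_pair.2 ⟨(w i * v j - w j * v i) / (u i * v j - u j * v i),
    (u i * w j - u j * w i) / (u i * v j - u j * v i), funext fun k => ?_⟩
  have hk := h i j k
  rw [tripleMinor] at hk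
  simp only [Pi.add_apply, Pi.smul_apply, smul_eq_mul]
  rw [div_mul_eq_mul_div, div_mul_eq_mul_div, ← add_div, div_eq_iff hij]
  linear_combination -hk

end TripleMinor

/-- With `t = plucker u v`, component `l` is the `3 × 3` minor of `(u, v, w)` on the rows other
than `l`. -/
def pluckerContract {R : Type*} [CommRing R] (t : Fin 6 → R) (w : Fin 4 → R) : Fin 4 → R :=
  ![w 1 * t 5 - w 2 * t 4 + w 3 * t 3, w 0 * t 5 - w 2 * t 2 + w 3 * t 1,
    w 0 * t 4 - w 1 * t 2 + w 3 * t 0, w 0 * t 3 - w 1 * t 1 + w 2 * t 0]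

theorem tripleMinor_eq_zero_of_pluckerContract_eq_zero {u v w : Fin 4 → ℂ}
    (h : pluckerContract (plucker u v) w = 0) (i j k : Fin 4) : tripleMinor u v w i j k = 0 := by
  have h0 := congrFun h 0
  have h1 := congrFun h 1
  have h2 := congrFun h 2
  have h3 := congrFun h 3
  simp only [pluckerContract, plucker, Matrix.cons_val, Matrix.cons_val_one, Matrix.cons_val_zero,
    Pi.zero_apply] at h0 h1 h2 h3
  -- a minor with a repeated row vanishes, the others are components of the contraction up to sign
  fin_cases i <;> fin_cases j <;> fin_cases k <;>
    simp only [tripleMinor, Fin.zero_eta, Fin.mk_one, Fin.reduceFinMk] <;>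
    first
      | ring1
      | linear_combination h0 | linear_combination -h0
      | linear_combination h1 | linear_combination -h1
      | linear_combination h2 | linear_combination -h2
      | linear_combination h3 | linear_combination -h3

theorem pluckerContract_plucker_eq_zero_of_mem_span {u v w : Fin 4 → ℂ}
    (hw : w ∈ Submodule.span ℂ {u, v}) : pluckerContract (plucker u v) w = 0 := by
  obtain ⟨a, b, rfl⟩ := Submodule.mem_span_pair.1 hw
  funext k
  fin_cases k <;>
    simp only [pluckerContract, plucker, Matrix.cons_val, Matrix.cons_val_one, Matrix.cons_val_zero,
      Fin.zero_eta, Fin.mk_one, Fin.reduceFinMk, Pi.add_apply, Pi.smul_apply, smul_eq_mul,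
      Pi.zero_apply] <;>
    ring

theorem mem_span_pair_iff_pluckerContract_eq_zero {u v w : Fin 4 → ℂ}
    (hli : LinearIndependent ℂ ![u, v]) :
    w ∈ Submodule.span ℂ {u, v} ↔ pluckerContract (plucker u v) w = 0 :=
  ⟨pluckerContract_plucker_eq_zero_of_mem_span, fun h =>
    mem_span_pair_of_tripleMinor_eq_zero hli (tripleMinor_eq_zero_of_pluckerContract_eq_zero h)⟩

theorem jt_zero : jt 0 = 0 := by
  funext k
  fin_cases k <;> simp [jt]

theorem jt_neg (w : Fin 4 → ℂ) : jt (-w) = -jt w := by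
  funext k
  fin_cases k <;> simp [jt]

theorem jt_jt (w : Fin 4 → ℂ) : jt (jt w) = -w := by
  funext k
  fin_cases k <;> simp [jt]

theorem pluckerContract_jt {t : Fin 6 → ℂ} (hreal : ∀ i, (t i).im = 0)
    (h25 : t 1 = t 4) (h34 : t 2 = -t 3) (w : Fin 4 → ℂ) :
    pluckerContract t (jt w) = -jt (pluckerContract t w) := by
  have hconj : ∀ i, starRingEnd ℂ (t i) = t i := fun i => Complex.conj_eq_iff_im.2 (hreal i)
  funext k
  fin_cases k <;>
    simp only [pluckerContract, jt, Matrix.cons_val, Matrix.cons_val_one, Matrix.cons_val_zero,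
      Fin.zero_eta, Fin.mk_one, Fin.reduceFinMk, Pi.neg_apply, map_add, map_sub, map_mul, map_neg,
      hconj, h25, h34] <;>
    ring

/-- If `u, v ∈ ℂ⁴` are linearly independent and the Plücker coordinates `t₁,…,t₆` of `(u,v)`
are all real and satisfy `t₂ = t₅` and `t₃ = −t₄`, then `W = span_ℂ{u,v}` satisfies
`j̃(W) = W`, i.e. the projective line `ℙ(W)` is a twistor line. -/
theorem stmt10 (u v : Fin 4 → ℂ) (hli : LinearIndependent ℂ ![u, v])
    (hreal : ∀ i : Fin 6, (plucker u v i).im = 0)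
    (h25 : plucker u v 1 = plucker u v 4)
    (h34 : plucker u v 2 = -plucker u v 3) :
    jt '' (Submodule.span ℂ {u, v} : Set (Fin 4 → ℂ)) =
      (Submodule.span ℂ {u, v} : Set (Fin 4 → ℂ)) := by
  set W := Submodule.span ℂ ({u, v} : Set (Fin 4 → ℂ))
  have hjt : ∀ w ∈ W, jt w ∈ W := fun w hw => by
    rw [mem_span_pair_iff_pluckerContract_eq_zero hli] at hw ⊢
    rw [pluckerContract_jt hreal h25 h34, hw, jt_zero, neg_zero]
  refine (Set.image_subset_iff.2 hjt).antisymm fun w hw => ⟨-jt w, W.neg_mem (hjt w hw), ?_⟩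
  rw [jt_neg, jt_jt, neg_neg]
end

section
/- Every plane in ℂℙ³ contains exactly one twistor line: for every 3-dimensional complex subspace H ⊆ ℂ⁴ there exists a unique 2-dimensional complex subspace W ⊆ H with j̃(W) = W. -/
open Submodule Module

section QuaternionicStructure

variable {V : Type*} [AddCommGroup V] [Module ℂ V] {J : V →ₛₗ[starRingEnd ℂ] V}

theorem finrank_map_of_injective_conj (hinj : Function.Injective J) (p : Submodule ℂ V) :
    finrank ℂ (p.map J) = finrank ℂ p := by
  let e := equivMapOfInjective J hinj p
  rw [finrank, finrank, rank_eq_of_equiv_equiv (starRingEnd ℂ) e.toAddEquiv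
    star_involutive.bijective e.map_smulₛₗ]

theorem le_inf_map_self {W p : Submodule ℂ V} (hWp : W ≤ p) (hW : W.map J = W) :
    W ≤ p ⊓ p.map J :=
  le_inf hWp (hW ▸ map_mono hWp)

variable (hJ : ∀ v, J (J v) = -v)
include hJ

theorem injective_of_apply_apply_eq_neg : Function.Injective J :=
  fun x y h ↦ neg_injective (by rw [← hJ x, ← hJ y, h])

theorem map_map_of_apply_apply_eq_neg (p : Submodule ℂ V) : (p.map J).map J = p := by
  ext x
  simp only [mem_map]
  constructor
  · rintro ⟨_, ⟨y, hy, rfl⟩, rfl⟩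
    simpa [hJ] using hy
  · exact fun hx ↦ ⟨J (-x), ⟨-x, p.neg_mem hx, rfl⟩, by rw [hJ, neg_neg]⟩

theorem apply_notMem_sup_span_singleton {q : Submodule ℂ V} (hq : q.map J ≤ q) {u : V}
    (hu : u ∉ q) : J u ∉ q ⊔ span ℂ {u} := by
  intro h
  obtain ⟨w, hw, _, hc, hJu⟩ := mem_sup.1 h
  obtain ⟨c, rfl⟩ := mem_span_singleton.1 hc
  have hJw : J w ∈ q := hq (mem_map_of_mem hw)
  -- applying `J` to `J u = w + c • u` gives `-u = J w + conj c • (w + c • u)`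
  have key : (1 + starRingEnd ℂ c * c) • u = -(J w + starRingEnd ℂ c • w) := by
    have := congrArg J hJu
    rw [hJ, map_add, map_smulₛₗ, ← hJu] at this
    linear_combination (norm := module) this
  have hne : 1 + starRingEnd ℂ c * c ≠ 0 := by
    rw [← Complex.normSq_eq_conj_mul_self]
    exact_mod_cast (add_pos_of_pos_of_nonneg one_pos (Complex.normSq_nonneg c)).ne'
  refine hu ((smul_mem_iff q hne).1 ?_)
  rw [key]
  exact q.neg_mem (q.add_mem hJw (q.smul_mem _ hw))

theorem map_sup_span_pair_le {q : Submodule ℂ V} (hq : q.map J ≤ q) (u : V) :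
    (q ⊔ span ℂ {u} ⊔ span ℂ {J u}).map J ≤ q ⊔ span ℂ {u} ⊔ span ℂ {J u} := by
  rw [Submodule.map_sup, Submodule.map_sup, map_span, map_span, Set.image_singleton,
    Set.image_singleton, hJ, ← Set.neg_singleton, span_neg, sup_right_comm q]
  exact sup_le_sup_right (sup_le_sup_right hq _) _

theorem finrank_sup_span_pair [FiniteDimensional ℂ V] {q : Submodule ℂ V} (hq : q.map J ≤ q)
    {u : V} (hu : u ∉ q) : finrank ℂ ↥(q ⊔ span ℂ {u} ⊔ span ℂ {J u}) = finrank ℂ q + 2 := by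
  rw [finrank_sup_span_singleton (apply_notMem_sup_span_singleton hJ hq hu),
    finrank_sup_span_singleton hu]

theorem even_finrank_of_map_le [FiniteDimensional ℂ V] {p : Submodule ℂ V} (hp : p.map J ≤ p) :
    Even (finrank ℂ p) := by
  suffices ∀ q ≤ p, q.map J ≤ q → Even (finrank ℂ p - finrank ℂ q) by
    simpa using this ⊥ bot_le (by simp)
  intro q
  induction q using WellFoundedGT.induction with
  | _ q ih =>
  intro hqp hq
  obtain rfl | hlt := hqp.eq_or_lt
  · simp
  obtain ⟨u, hup, huq⟩ := SetLike.exists_of_lt hlt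
  have hq'p : q ⊔ span ℂ {u} ⊔ span ℂ {J u} ≤ p :=
    sup_le (sup_le hqp ((span_singleton_le_iff_mem _ _).2 hup))
      ((span_singleton_le_iff_mem _ _).2 (hp (mem_map_of_mem hup)))
  have hdim := finrank_sup_span_pair hJ hq huq
  have hlt' : q < q ⊔ span ℂ {u} ⊔ span ℂ {J u} :=
    lt_of_le_of_ne (le_sup_left.trans le_sup_left) fun h ↦ by rw [← h] at hdim; omega
  obtain ⟨k, hk⟩ := ih _ hlt' hq'p (map_sup_span_pair_le hJ hq u)
  have := finrank_mono hq'p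
  exact ⟨k + 1, by omega⟩

theorem map_inf_map_self (p : Submodule ℂ V) : (p ⊓ p.map J).map J = p ⊓ p.map J := by
  rw [map_inf _ (injective_of_apply_apply_eq_neg hJ), map_map_of_apply_apply_eq_neg hJ, inf_comm]

theorem finrank_add_finrank_le_finrank_inf_map_add [FiniteDimensional ℂ V] (p : Submodule ℂ V) :
    finrank ℂ p + finrank ℂ p ≤ finrank ℂ ↥(p ⊓ p.map J) + finrank ℂ V := by
  have := finrank_sup_add_finrank_inf_eq p (p.map J)
  rw [finrank_map_of_injective_conj (injective_of_apply_apply_eq_neg hJ)] at this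
  have := (p ⊔ p.map J).finrank_le
  omega

end QuaternionicStructure

noncomputable def jtₛₗ : (Fin 4 → ℂ) →ₛₗ[starRingEnd ℂ] (Fin 4 → ℂ) where
  toFun := jt
  map_add' x y := by
    funext i
    fin_cases i <;> simp [jt] <;> ring
  map_smul' c x := by
    funext i
    fin_cases i <;> simp [jt]

theorem jtₛₗ_apply_apply (z : Fin 4 → ℂ) : jtₛₗ (jtₛₗ z) = -z := by
  funext i
  fin_cases i <;> simp [jtₛₗ, jt]

theorem image_jt_eq_iff (W : Submodule ℂ (Fin 4 → ℂ)) :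
    jt '' (W : Set (Fin 4 → ℂ)) = W ↔ W.map jtₛₗ = W := by
  rw [← SetLike.coe_set_eq (p := W.map jtₛₗ), map_coe]
  rfl

/-- Every plane in `ℂℙ³` contains exactly one twistor line: for every 3-dimensional complex
subspace `H ⊆ ℂ⁴` there is a unique 2-dimensional complex subspace `W ⊆ H` with
`j̃(W) = W`. -/
theorem stmt12 (H : Submodule ℂ (Fin 4 → ℂ)) (hH : Module.finrank ℂ H = 3) :
    ∃! W : Submodule ℂ (Fin 4 → ℂ),
      Module.finrank ℂ W = 2 ∧ jt '' (W : Set (Fin 4 → ℂ)) = (W : Set (Fin 4 → ℂ)) ∧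
      W ≤ H := by
  have hJ := jtₛₗ_apply_apply
  have hL : finrank ℂ ↥(H ⊓ H.map jtₛₗ) = 2 := by
    have hlow := finrank_add_finrank_le_finrank_inf_map_add hJ H
    have hup : finrank ℂ ↥(H ⊓ H.map jtₛₗ) ≤ 3 := hH ▸ finrank_mono inf_le_left
    obtain ⟨k, hk⟩ := even_finrank_of_map_le hJ (map_inf_map_self hJ H).le
    rw [hH, finrank_fin_fun] at hlow
    omega
  refine ⟨H ⊓ H.map jtₛₗ, ⟨hL, (image_jt_eq_iff _).2 (map_inf_map_self hJ H), inf_le_left⟩, ?_⟩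
  rintro W ⟨hW, hWinv, hWH⟩
  exact eq_of_le_of_finrank_le (le_inf_map_self hWH ((image_jt_eq_iff W).1 hWinv)) (by omega)
end
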